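/- Let M = [a,b) and N = [c,d) be interval modules (0 ≤ a < b, 0 ≤ c < d) with both S_{M,N} and S_{N,M} nonempty. If min S_{M,N} ≥ min S_{N,M}, then sup S_{M,N} ≥ sup S_{N,M}; that is, the last homomorphism between M and N to be born is also the last to die. -/

import Mathlib

open scoped NNReal

/-- A persistence module: a functor from `[0,∞)` to real vector spaces. -/
structure PM where
  V : ℝ≥0 → Type
  [grp : ∀ x, AddCommGroup (V x)]
  [mod : ∀ x, Module ℝ (V x)]
  map : ∀ {x y : ℝ≥0}, x ≤ y → (V x →ₗ[ℝ] V y)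
  map_id : ∀ x : ℝ≥0, map (le_refl x) = LinearMap.id
  map_comp : ∀ {x y z : ℝ≥0} (h1 : x ≤ y) (h2 : y ≤ z),
    (map h2).comp (map h1) = map (h1.trans h2)

attribute [instance] PM.grp PM.mod

/-- A morphism of persistence modules. -/
structure PM.Hom (M N : PM) where
  app : ∀ x : ℝ≥0, M.V x →ₗ[ℝ] N.V x
  comm : ∀ {x y : ℝ≥0} (h : x ≤ y), (app y).comp (M.map h) = (N.map h).comp (app x)

/-- The shifted module `M·ε`. -/
def PM.shift (M : PM) (ε : ℝ≥0) : PM where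
  V x := M.V (x + ε)
  grp x := inferInstance
  mod x := inferInstance
  map h := M.map (add_le_add h le_rfl)
  map_id x := M.map_id (x + ε)
  map_comp h1 h2 := M.map_comp _ _

noncomputable def intervalSub (α β : ℝ) (x : ℝ≥0) : Submodule ℝ ℝ :=
  if α ≤ (x : ℝ) ∧ (x : ℝ) < β then ⊤ else ⊥

/-- The interval module `[α,β)`. -/
noncomputable def intervalModule (α β : ℝ) : PM where
  V x := ↥(intervalSub α β x)
  grp x := inferInstance
  mod x := inferInstance
  map {x y} h := LinearMap.codRestrict _
      ((if α ≤ (x : ℝ) ∧ (y : ℝ) < β then (1 : ℝ) else 0) • (intervalSub α β x).subtype)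
      (by
        intro v
        by_cases hy : α ≤ (y : ℝ) ∧ (y : ℝ) < β
        · simp [intervalSub, hy]
        · have hc : ¬(α ≤ (x : ℝ) ∧ (y : ℝ) < β) := by
            intro hc
            exact hy ⟨le_trans hc.1 (by exact_mod_cast h), hc.2⟩
          simp only [if_neg hc, zero_smul, LinearMap.zero_apply]
          exact Submodule.zero_mem _)
  map_id x := by
    ext v
    by_cases hx : α ≤ (x : ℝ) ∧ (x : ℝ) < β
    · simp [hx]
    · have hv : (v : ℝ) = 0 := by
        have h2 := v.2
        simp only [intervalSub, if_neg hx, Submodule.mem_bot] at h2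
        exact h2
      simp [hx, hv]
  map_comp {x y z} h1 h2 := by
    ext v
    by_cases hC : α ≤ (x : ℝ) ∧ (z : ℝ) < β
    · have hA : α ≤ (x : ℝ) ∧ (y : ℝ) < β :=
        ⟨hC.1, lt_of_le_of_lt (by exact_mod_cast h2) hC.2⟩
      have hB : α ≤ (y : ℝ) ∧ (z : ℝ) < β :=
        ⟨le_trans hC.1 (by exact_mod_cast h1), hC.2⟩
      simp [hA, hB, hC]
    · rcases not_and_or.mp hC with hx | hz
      · have hA : ¬(α ≤ (x : ℝ) ∧ (y : ℝ) < β) := fun h => hx h.1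
        simp [hA, hC]
        split_ifs <;> simp
      · have hB : ¬(α ≤ (y : ℝ) ∧ (z : ℝ) < β) := fun h => hz h.2
        simp [hB, hC]

/-- `Hom(M,N) ≠ {0}`: there is a nonzero morphism from `M` to `N`. -/
def HomNeZero (M N : PM) : Prop := ∃ F : PM.Hom M N, ∃ x, F.app x ≠ 0

/-- `S_{M,N} = {x ≥ 0 : Hom(M, N·x) ≠ {0}}`. -/
noncomputable def Sset (M N : PM) : Set ℝ :=
  {x : ℝ | 0 ≤ x ∧ HomNeZero M (N.shift x.toNNReal)}

/-- The canonical morphism `Π_M^{M·τ} : M → M·τ`. -/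
def PM.pi (M : PM) (τ : ℝ≥0) : M.Hom (M.shift τ) where
  app x := M.map le_self_add
  comm {x y} h := by
    show (M.map le_self_add).comp (M.map h) =
      (M.map (add_le_add h le_rfl)).comp (M.map le_self_add)
    rw [M.map_comp, M.map_comp]

/-- The pair `(Φ, Ψ)` is an `ε`-interleaving between `M` and `N`:
`(Ψ·ε) ∘ Φ = Π_M^{M·2ε}` and `(Φ·ε) ∘ Ψ = Π_N^{N·2ε}` (expressed pointwise). -/
def IsInterleaving (M N : PM) (ε : ℝ≥0)
    (Φ : M.Hom (N.shift ε)) (Ψ : N.Hom (M.shift ε)) : Prop :=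
  (∀ x : ℝ≥0, (Ψ.app (x + ε)).comp (Φ.app x) =
      M.map (le_self_add.trans le_self_add : x ≤ x + ε + ε)) ∧
  (∀ x : ℝ≥0, (Φ.app (x + ε)).comp (Ψ.app x) =
      N.map (le_self_add.trans le_self_add : x ≤ x + ε + ε))

/-!
For `0 ≤ a < b`, a nonzero morphism `[a,b) → [c,d)·x` exists exactly when the shifted bar
`[c - x, d - x)` starts no later than `a` and ends in `(a, b]`: it is then the identity on the
overlap, and conversely a nonzero morphism is nonzero on the generator at `a` and vanishes where
`[a,b)` dies. Hence `S_{M,N} = [max(0, c-a, d-b), d-a)` and `S_{N,M} = [max(0, a-c, b-d), b-c)`.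
If `d - a < b - c`, then `c - a < b - d` and `d - b < a - c`, so `min S_{N,M} > min S_{M,N}` unless
both minima vanish, which forces `a ≤ c` and `b ≤ d`, contradicting `d - a < b - c`.
-/

open Set

lemma PM.Hom.app_map {M N : PM} (F : M.Hom N) {p q : ℝ≥0} (h : p ≤ q) (v : M.V p) :
    F.app q (M.map h v) = N.map h (F.app p v) :=
  LinearMap.congr_fun (F.comm h) v

namespace intervalSub

lemma eq_top {a b : ℝ} {x : ℝ≥0} (h : a ≤ x ∧ (x : ℝ) < b) : intervalSub a b x = ⊤ :=
  if_pos h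

noncomputable def transfer (a b c d : ℝ) (s y : ℝ≥0) :
    intervalSub a b s →ₗ[ℝ] intervalSub c d y :=
  if h : c ≤ y ∧ (y : ℝ) < d then Submodule.inclusion (le_top.trans (eq_top h).ge) else 0

lemma coe_transfer (a b c d : ℝ) (s y : ℝ≥0) (v : intervalSub a b s) :
    (transfer a b c d s y v : ℝ) = if c ≤ y ∧ (y : ℝ) < d then (v : ℝ) else 0 := by
  unfold transfer
  split_ifs <;> rfl

end intervalSub

namespace intervalModule

variable {a b c d : ℝ} {p q : ℝ≥0}

lemma coe_map (h : p ≤ q) (v : intervalSub a b p) :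
    Subtype.val ((intervalModule a b).map h v : intervalSub a b q) =
      (if a ≤ (p : ℝ) ∧ (q : ℝ) < b then 1 else 0) * v :=
  rfl

lemma mem_of_ne_zero {v : intervalSub a b p} (hv : v ≠ 0) : a ≤ p ∧ (p : ℝ) < b := by
  by_contra h
  have hv' := v.2
  simp only [intervalSub, if_neg h, Submodule.mem_bot] at hv'
  exact hv (Subtype.ext hv')

lemma map_ne_zero (h : p ≤ q) (hq : (q : ℝ) < b) {v : intervalSub a b p} (hv : v ≠ 0) :
    (intervalModule a b).map h v ≠ 0 := by
  intro h0
  have := congrArg Subtype.val h0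
  rw [coe_map, if_pos ⟨(mem_of_ne_zero hv).1, hq⟩, one_mul] at this
  exact hv (Subtype.ext this)

lemma map_eq_zero (h : p ≤ q) (hq : b ≤ q) (v : intervalSub a b p) :
    (intervalModule a b).map h v = 0 := by
  apply Subtype.ext
  rw [coe_map, if_neg (fun h' => hq.not_gt h'.2), zero_mul]
  rfl

lemma map_surjective (h : p ≤ q) (hp : a ≤ p) (hq : (q : ℝ) < b) :
    Function.Surjective ((intervalModule a b).map h) := by
  intro (w : intervalSub a b q)
  have hpb : (p : ℝ) < b := lt_of_le_of_lt (NNReal.coe_le_coe.mpr h) hq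
  refine ⟨⟨w, by simp [intervalSub.eq_top ⟨hp, hpb⟩]⟩, Subtype.ext ?_⟩
  rw [coe_map, if_pos ⟨hp, hq⟩, one_mul]

noncomputable def homShift (t : ℝ≥0) (hc : c ≤ a + t) (hd : d ≤ b + t) :
    (intervalModule a b).Hom ((intervalModule c d).shift t) where
  app s := intervalSub.transfer a b c d s (s + t)
  comm {p q} h := by
    ext (v : intervalSub a b p)
    apply Subtype.ext
    erw [intervalSub.coe_transfer, coe_map h, coe_map (add_le_add h le_rfl),
      intervalSub.coe_transfer]
    by_cases hv : v = 0
    · simp [hv]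
    obtain ⟨hap, hpb⟩ := mem_of_ne_zero hv
    have hpq : (p : ℝ) ≤ q := h
    simp only [NNReal.coe_add]
    by_cases hqd : (q : ℝ) + t < d
    · simp [hap, hqd, show c ≤ (p : ℝ) + t by linarith, show c ≤ (q : ℝ) + t by linarith,
        show (p : ℝ) + t < d by linarith, show (q : ℝ) < b by linarith]
    · simp [hqd]

lemma homNeZero_shift_iff (ha : 0 ≤ a) (hab : a < b) (t : ℝ≥0) :
    HomNeZero (intervalModule a b) ((intervalModule c d).shift t) ↔
      c ≤ a + t ∧ a + t < d ∧ d ≤ b + t := by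
  have hat : ((a.toNNReal : ℝ≥0) : ℝ) = a := Real.coe_toNNReal a ha
  have hbt : ((b.toNNReal : ℝ≥0) : ℝ) = b := Real.coe_toNNReal b (ha.trans hab.le)
  constructor
  · rintro ⟨F, s, hF⟩
    obtain ⟨v, hv⟩ : ∃ v : intervalSub a b s, F.app s v ≠ 0 := by
      by_contra! h
      exact hF (LinearMap.ext h)
    obtain ⟨has, hsb⟩ := mem_of_ne_zero (fun h0 : v = 0 => hv (h0 ▸ map_zero _))
    have hdb : d ≤ b + t := by
      by_contra! hbd
      have hsb' : s ≤ b.toNNReal := by rw [← NNReal.coe_le_coe, hbt]; exact hsb.le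
      have h1 := F.app_map hsb' v
      rw [map_eq_zero hsb' hbt.ge v, map_zero] at h1
      exact map_ne_zero (add_le_add hsb' le_rfl) (by push_cast; linarith) hv h1.symm
    have has' : a.toNNReal ≤ s := by rw [← NNReal.coe_le_coe, hat]; exact has
    obtain ⟨u, rfl⟩ := map_surjective has' hat.ge hsb v
    have hu : F.app a.toNNReal u ≠ 0 := fun h0 => hv (by rw [F.app_map, h0, map_zero])
    obtain ⟨hca, had⟩ := mem_of_ne_zero hu
    push_cast [hat] at hca had
    exact ⟨hca, had, hdb⟩
  · rintro ⟨hca, had, hdb⟩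
    refine ⟨homShift t hca hdb, a.toNNReal, fun h0 => ?_⟩
    have hat_top : intervalSub a b a.toNNReal = ⊤ :=
      intervalSub.eq_top ⟨hat.ge, hat.trans_lt hab⟩
    have h1 := congrArg Subtype.val (LinearMap.congr_fun h0 ⟨1, by simp [hat_top]⟩)
    erw [intervalSub.coe_transfer, if_pos (by push_cast [hat]; exact ⟨hca, had⟩)] at h1
    exact one_ne_zero h1

end intervalModule

lemma Sset_intervalModule {a b c d : ℝ} (ha : 0 ≤ a) (hab : a < b) :
    Sset (intervalModule a b) (intervalModule c d) =
      Ico (max 0 (max (c - a) (d - b))) (d - a) := by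
  ext x
  simp only [Sset, mem_ofPred_eq, mem_Ico, max_le_iff]
  constructor
  · rintro ⟨hx, hF⟩
    rw [intervalModule.homNeZero_shift_iff ha hab, Real.coe_toNNReal x hx] at hF
    refine ⟨⟨hx, ?_, ?_⟩, ?_⟩ <;> linarith
  · rintro ⟨⟨hx, hca, hdb⟩, hda⟩
    refine ⟨hx, (intervalModule.homNeZero_shift_iff ha hab _).mpr ?_⟩
    rw [Real.coe_toNNReal x hx]
    refine ⟨?_, ?_, ?_⟩ <;> linarith

lemma sub_le_sub_of_max_le_max {a b c d : ℝ}
    (h : max 0 (max (a - c) (b - d)) ≤ max 0 (max (c - a) (d - b))) : b - c ≤ d - a := by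
  grind

theorem stmt18 (a b c d σ σ' τ τ' : ℝ) (ha : 0 ≤ a) (hab : a < b) (hc : 0 ≤ c) (hcd : c < d)
    (hσ : IsLeast (Sset (intervalModule a b) (intervalModule c d)) σ) (hσ' : IsLUB (Sset (intervalModule a b) (intervalModule c d)) σ')
    (hτ : IsLeast (Sset (intervalModule c d) (intervalModule a b)) τ) (hτ' : IsLUB (Sset (intervalModule c d) (intervalModule a b)) τ')
    (hmin : σ ≥ τ) :
    σ' ≥ τ' := by
  rw [Sset_intervalModule ha hab] at hσ hσ'
  rw [Sset_intervalModule hc hcd] at hτ hτ'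
  have hMN := nonempty_Ico.mp ⟨σ, hσ.1⟩
  have hNM := nonempty_Ico.mp ⟨τ, hτ.1⟩
  rw [hσ.unique (isLeast_Ico hMN), hτ.unique (isLeast_Ico hNM)] at hmin
  rw [hσ'.unique (isLUB_Ico hMN), hτ'.unique (isLUB_Ico hNM)]
  exact sub_le_sub_of_max_le_max hmin
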